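/- arXiv:1711.04701 — 3 statements merged into one kernel-verified Lean document; each statement's English description precedes it below -/
import Mathlib

section
/- Let V be the graded vector space over a field K of characteristic zero spanned by two symbols a and b in degree 1, and let U be the truncated tensor algebra T̲(V) = ⊕_{n≥1} V^{⊗n} with differential b₁(v₁⋯vₙ) = Σ_{i=1}^n (-1)^{i+1} v₁⋯v_i (a+b) v_{i+1}⋯vₙ (inserting a+b after the i-th factor). Then the cochain complex (U, b₁) is acyclic, i.e. H^n(U) = 0 for all n. -/
/-- The degree-`n` component `V^{⊗n}` of the truncated tensor algebra on
`V = span{a, b}` (with `a, b` in degree 1), realized as functions on words of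
length `n` over the two-letter alphabet `{a, b}` (encoded as `Bool`). -/
abbrev Wd (K : Type) (n : ℕ) := (Fin n → Bool) → K

/-- The differential `b₁` inserting `a + b` after the `i`-th tensor factor with
sign `(-1)^{i+1}`, for `i = 1, …, n`. On the function model, the coefficient of
a word `w` of length `n+1` is the signed sum over insertion positions `p ≠ 0`
of the coefficient of the word obtained by deleting the letter at position `p`. -/
def b1 (K : Type) [Field K] (n : ℕ) (X : Wd K n) : Wd K (n + 1) :=
  fun w => ∑ p : Fin (n + 1),
    (if (p : ℕ) = 0 then 0 else (-1 : K) ^ ((p : ℕ) + 1)) * X (fun j => w (p.succAbove j))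

/-!
The operator `h` that reads the coefficient of a word after inserting the letter `false` in
second position is a contracting homotopy: `h ∘ b₁ = id` in degree 1 and
`h ∘ b₁ + b₁ ∘ h = id` in higher degrees. In `h (b₁ X)`, deleting the inserted letter
returns `X`, while deleting any later letter commutes with the insertion and reproduces a
term of `b₁ (h X)` with the opposite sign.
-/

namespace Fin

theorem removeNth_succ_cons {α : Type*} {n : ℕ} (a : α) (f : Fin (n + 1) → α) (i : Fin (n + 1)) :
    removeNth i.succ (cons a f : Fin (n + 2) → α) = cons a (removeNth i f) :=
  cons_comp_succ_succAbove a f i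

theorem insertNth_one_eq_cons_cons {α : Type*} {n : ℕ} (x : α) (w : Fin (n + 1) → α) :
    (insertNth 1 x w : Fin (n + 2) → α) = cons (w 0) (cons x (tail w)) := by
  rw [← cons_self_tail w, ← succ_zero_eq_one, insertNth_succ_cons, insertNth_zero']
  rfl

theorem removeNth_succ_succ_insertNth_one {α : Type*} {n : ℕ} (x : α) (w : Fin (n + 2) → α)
    (i : Fin (n + 1)) :
    removeNth i.succ.succ (insertNth 1 x w : Fin (n + 3) → α) =
      (insertNth 1 x (removeNth i.succ w) : Fin (n + 2) → α) := by
  rw [insertNth_one_eq_cons_cons, insertNth_one_eq_cons_cons, ← cons_self_tail w]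
  simp only [removeNth_succ_cons, cons_zero, tail_cons]

end Fin

namespace Wd

variable {K : Type} [Field K]

theorem b1_apply {n : ℕ} (X : Wd K n) (w : Fin (n + 1) → Bool) :
    b1 K n X w = ∑ i : Fin n, (-1 : K) ^ (i : ℕ) * X (Fin.removeNth i.succ w) := by
  rw [b1, Fin.sum_univ_succ]
  simp only [Fin.coe_ofNat_eq_mod, Nat.zero_mod, ↓reduceIte, zero_mul, Fin.val_succ,
    Nat.add_eq_zero_iff, one_ne_zero, and_false, pow_succ, mul_neg, mul_one, neg_neg, zero_add]
  rfl

def homotopy {n : ℕ} (X : Wd K (n + 2)) : Wd K (n + 1) :=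
  fun w => X (Fin.insertNth 1 false w)

@[simp]
theorem homotopy_zero {n : ℕ} : homotopy (0 : Wd K (n + 2)) = 0 :=
  rfl

theorem homotopy_b1_one (X : Wd K 1) : homotopy (b1 K 1 X) = X := by
  funext w
  simp [homotopy, b1_apply]

theorem homotopy_b1_add_b1_homotopy {n : ℕ} (X : Wd K (n + 2)) :
    homotopy (b1 K (n + 2) X) + b1 K (n + 1) (homotopy X) = X := by
  funext w
  simp only [Pi.add_apply, homotopy, b1_apply, Fin.sum_univ_succ (n := n + 1),
    Fin.removeNth_succ_succ_insertNth_one]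
  simp [pow_succ]

end Wd

theorem U_acyclic_general (K : Type) [Field K] :
    (∀ X : Wd K 1, b1 K 1 X = 0 → X = 0) ∧
    (∀ n : ℕ, ∀ X : Wd K (n + 2), b1 K (n + 2) X = 0 →
      ∃ Y : Wd K (n + 1), b1 K (n + 1) Y = X) := by
  refine ⟨fun X hX => ?_, fun n X hX => ⟨Wd.homotopy X, ?_⟩⟩
  · rw [← Wd.homotopy_b1_one X, hX, Wd.homotopy_zero]
  · simpa [hX] using Wd.homotopy_b1_add_b1_homotopy X

/-- The cochain complex `U = (T̲(V), b₁)` is acyclic: the kernel of `b₁` on the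
lowest degree component `V` is zero, and every cocycle in degree `≥ 2` is a
coboundary. -/
theorem U_acyclic (K : Type) [Field K] [CharZero K] :
    (∀ X : Wd K 1, b1 K 1 X = 0 → X = 0) ∧
    (∀ n : ℕ, ∀ X : Wd K (n + 2), b1 K (n + 2) X = 0 →
      ∃ Y : Wd K (n + 1), b1 K (n + 1) Y = X) :=
  U_acyclic_general K
end

section
/- Let V be spanned by degree-1 symbols a and b over a field K of characteristic zero, and let R be the truncated tensor algebra T̲(V) with differential b₂(v₁⋯vₙ) = -(a+b)v₁⋯vₙ + Σ_{i=1}^n (-1)^{i+1} v₁⋯v_i (a+b) v_{i+1}⋯vₙ. Then H^n(R) = 0 for n ≠ 1, H^1(R) ≅ K, and H^1(R) is spanned by the class of the cocycle a+b. -/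
/-- The differential `b₂(v₁⋯vₙ) = -(a+b)v₁⋯vₙ + b₁(v₁⋯vₙ)`. -/
def b2 (K : Type) [Field K] (n : ℕ) (X : Wd K n) : Wd K (n + 1) :=
  fun w => -(X (fun j => w j.succ)) + b1 K n X w

/-!
Let `h` be the contraction of the first letter against `a*`. Then `h b₂ + b₂ h = -id` in every
positive degree: the leading term `-(a+b)X` is undone by `h`, and the insertions at positions
`i + 1` and `i` of the two composites cancel in pairs, except the single insertion at the front.
Hence a cocycle `X` is the coboundary `b₂(-h X)`. In degree `1` this involves `b₂` on the
scalars `V^{⊗0}` (not part of `T̲(V)`), which is `c ↦ -c(a+b)`, so degree-`1` cocycles are constant.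
-/

section Homotopy

variable {K : Type} [Field K]

/-- With `false` encoding `a`: `a w ↦ w`, `b w ↦ 0`. -/
def contractHead {m : ℕ} (X : Wd K (m + 1)) : Wd K m := fun u => X (Fin.cons false u)

lemma b2_neg (n : ℕ) (X : Wd K n) : b2 K n (-X) = -b2 K n X := by
  funext w
  simp only [b2, b1, Pi.neg_apply, mul_neg, Finset.sum_neg_distrib]
  ring

lemma b2_zero (Y : Wd K 0) : b2 K 0 Y = fun _ => -Y ![] := by
  funext w
  simp [b2, b1, Subsingleton.elim (fun j : Fin 0 => w j.succ) ![]]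

lemma b2_one_const (c : K) : b2 K 1 (fun _ => c) = 0 := by
  funext w
  simp [b2, b1, Fin.sum_univ_two]

lemma b1_cons_false_add (m : ℕ) (X : Wd K (m + 1)) (w : Fin (m + 1) → Bool) :
    b1 K (m + 1) X (Fin.cons false w) + b1 K m (contractHead X) w =
      contractHead X (fun j => w j.succ) := by
  have hcons : ∀ x : Fin (m + 1), (fun j => (Fin.cons false w : Fin (m + 2) → Bool)
      (x.succ.succAbove j)) = Fin.cons false (fun j => w (x.succAbove j)) := by
    intro x; funext j
    refine Fin.cases ?_ (fun j => ?_) j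
    · simp
    · simp [Fin.succ_succAbove_succ]
  simp only [b1, contractHead]
  rw [Fin.sum_univ_succ, add_assoc, ← Finset.sum_add_distrib, Fin.sum_univ_succ]
  simp only [hcons, Fin.val_zero, Fin.val_succ, Fin.succAbove_zero]
  simp [pow_succ]

lemma contractHead_b2_add_b2_contractHead (m : ℕ) (X : Wd K (m + 1)) :
    contractHead (b2 K (m + 1) X) + b2 K m (contractHead X) = -X := by
  funext w
  have hsucc : (fun j => (Fin.cons false w : Fin (m + 2) → Bool) j.succ) = w := by
    funext j; simp
  have hb1 := b1_cons_false_add m X w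
  simp only [contractHead] at hb1
  simp only [Pi.add_apply, Pi.neg_apply, contractHead, b2, hsucc]
  linear_combination hb1

lemma b2_neg_contractHead_of_b2_eq_zero {m : ℕ} {X : Wd K (m + 1)} (hX : b2 K (m + 1) X = 0) :
    b2 K m (-contractHead X) = X := by
  have h := contractHead_b2_add_b2_contractHead m X
  rw [hX, show contractHead (0 : Wd K (m + 2)) = 0 from rfl, zero_add] at h
  rw [b2_neg, h, neg_neg]

end Homotopy

theorem R_cohomology_general (K : Type) [Field K] :
    (∀ X : Wd K 1, b2 K 1 X = 0 ↔ ∃ c : K, X = fun _ => c) ∧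
    ((fun _ => (1 : K)) ≠ (0 : Wd K 1)) ∧
    (∀ n : ℕ, ∀ X : Wd K (n + 2), b2 K (n + 2) X = 0 →
      ∃ Y : Wd K (n + 1), b2 K (n + 1) Y = X) := by
  refine ⟨fun X => ⟨fun hX => ?_, ?_⟩, ?_, fun n X hX => ⟨_, b2_neg_contractHead_of_b2_eq_zero hX⟩⟩
  · have h := b2_neg_contractHead_of_b2_eq_zero hX
    rw [b2_zero] at h
    exact ⟨_, h.symm⟩
  · rintro ⟨c, rfl⟩
    exact b2_one_const c
  · intro h
    simpa using congrFun h ![false]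

/-- For `R = (T̲(V), b₂)`: `H¹(R)` is one-dimensional, spanned by the class of
the cocycle `a + b` (the constant function `1` on words of length one), and
`Hⁿ(R) = 0` for `n ≠ 1` (in degree `≥ 2` every cocycle is a coboundary). -/
theorem R_cohomology (K : Type) [Field K] [CharZero K] :
    (∀ X : Wd K 1, b2 K 1 X = 0 ↔ ∃ c : K, X = fun _ => c) ∧
    ((fun _ => (1 : K)) ≠ (0 : Wd K 1)) ∧
    (∀ n : ℕ, ∀ X : Wd K (n + 2), b2 K (n + 2) X = 0 →
      ∃ Y : Wd K (n + 1), b2 K (n + 1) Y = X) :=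
  R_cohomology_general K
end

section
/- Let P be the full tensor algebra T(V) on V = span{a, b} (a, b of degree 1) over a field K of characteristic zero, with differential b₃ defined by b₃(1) = (a+b)/2, b₃(a) = b₃(b) = 0, and b₃(v₁⋯vₙ) = Σ_{i=1}^{n-1} (-1)^{i+1} v₁⋯v_i (a+b) v_{i+1}⋯vₙ for n ≥ 2. Then H^n(P) = 0 for n ≠ 1, H^1(P) ≅ K spanned by the class of a, and the cocycles a and -b are cohomologous. -/
/-- The differential `b₃` in positive degrees: it inserts `a+b` only at the
internal positions `i = 1, …, n-1` with sign `(-1)^{i+1}`; in particular it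
vanishes on degree 1 (so `b₃(a) = b₃(b) = 0`). -/
def b3 (K : Type) [Field K] (n : ℕ) (X : Wd K n) : Wd K (n + 1) :=
  fun w => ∑ p : Fin (n + 1),
    (if (p : ℕ) = 0 ∨ (p : ℕ) = n then 0 else (-1 : K) ^ ((p : ℕ) + 1))
      * X (fun j => w (p.succAbove j))

/-- The differential `b₃` on the degree-0 component: `b₃(1) = (a+b)/2`, i.e.
`c ↦` the constant function `c/2` on one-letter words. -/
def b3zero (K : Type) [Field K] (c : K) : Wd K 1 := fun _ => c / 2

/-- The element `a` of `V` in the function model. -/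
def aElt (K : Type) [Field K] : Wd K 1 := fun w => if w 0 = false then 1 else 0

/-- The element `b` of `V` in the function model. -/
def bElt (K : Type) [Field K] : Wd K 1 := fun w => if w 0 = true then 1 else 0

/-!
In degrees `≥ 2` the map `h X := X ∘ Fin.insertNth 1 false`, which contracts against the letter
`a` placed at position `1`, is a contracting homotopy: `(b₃ X)(insert a at 1 into w)` equals
`X w` (removing the inserted letter, sign `+1`) minus `(b₃ (h X)) w`, since removing any later
internal letter commutes with the insertion while shifting the sign, and the last position stays
a boundary position. In degrees `0` and `1` everything is a direct computation on the two
one-letter words, where `b₃(1) = (a+b)/2` makes `a` and `-b` cohomologous and `a` non-exact.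
-/

lemma Wd.ext_one {K : Type} {X Y : Wd K 1} (ha : X (fun _ => false) = Y (fun _ => false))
    (hb : X (fun _ => true) = Y (fun _ => true)) : X = Y := by
  funext w
  rw [show w = fun _ => w 0 from funext fun i => congrArg w (Subsingleton.elim i 0)]
  cases w 0
  exacts [ha, hb]

def b3Coeff (K : Type) [Field K] (n p : ℕ) : K :=
  if p = 0 ∨ p = n then 0 else (-1) ^ (p + 1)

variable {K : Type} [Field K]

lemma b3_apply (n : ℕ) (X : Wd K n) (w : Fin (n + 1) → Bool) :
    b3 K n X w = ∑ p : Fin (n + 1), b3Coeff K n p * X (Fin.removeNth p w) := rfl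

lemma b3Coeff_zero (n : ℕ) : b3Coeff K n 0 = 0 := if_pos (Or.inl rfl)

lemma b3Coeff_self (n : ℕ) : b3Coeff K n n = 0 := if_pos (Or.inr rfl)

lemma b3Coeff_one (n : ℕ) : b3Coeff K (n + 2) 1 = 1 := by
  simp [b3Coeff]

lemma b3Coeff_succ_succ (n p : ℕ) : b3Coeff K (n + 2) (p + 2) = -b3Coeff K (n + 1) (p + 1) := by
  simp only [b3Coeff, add_left_inj, add_eq_zero, OfNat.ofNat_ne_zero, one_ne_zero, and_false,
    false_or]
  split_ifs <;> ring

lemma b3_apply_succ (n : ℕ) (X : Wd K (n + 1)) (w : Fin (n + 2) → Bool) :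
    b3 K (n + 1) X w =
      ∑ i : Fin (n + 1), b3Coeff K (n + 1) (i + 1) * X (Fin.removeNth i.succ w) := by
  simp [b3_apply, Fin.sum_univ_succ, b3Coeff_zero]

lemma b3_one (X : Wd K 1) : b3 K 1 X = 0 := by
  funext w
  simp [b3_apply, Fin.sum_univ_two, b3Coeff_zero, b3Coeff_self 1]

lemma Fin.removeNth_succ_cons_s3 {α : Type*} {n : ℕ} (x : α) (u : Fin (n + 1) → α)
    (i : Fin (n + 1)) :
    Fin.removeNth i.succ (Fin.cons x u : Fin (n + 2) → α) = Fin.cons x (Fin.removeNth i u) :=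
  Fin.cons_comp_succ_succAbove x u i

lemma Fin.insertNth_one_cons {α : Type*} {n : ℕ} (a x : α) (u : Fin n → α) :
    Fin.insertNth (1 : Fin (n + 2)) a (Fin.cons x u : Fin (n + 1) → α) =
      (Fin.cons x (Fin.cons a u : Fin (n + 1) → α) : Fin (n + 2) → α) := by
  simpa using Fin.insertNth_succ_cons (0 : Fin (n + 1)) a x u

theorem b3_insertNth_one (n : ℕ) (X : Wd K (n + 2)) (w : Fin (n + 2) → Bool) :
    b3 K (n + 2) X (Fin.insertNth 1 false w) =
      X w - b3 K (n + 1) (fun u => X (Fin.insertNth 1 false u)) w := by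
  refine Fin.consCases (fun x u => ?_) w
  rw [b3_apply_succ, b3_apply_succ, Fin.sum_univ_succ, Fin.insertNth_one_cons]
  simp only [Fin.removeNth_succ_cons_s3, Fin.removeNth_zero, Fin.tail_cons, Fin.insertNth_one_cons,
    Fin.val_zero, Fin.val_succ, b3Coeff_succ_succ]
  simp only [zero_add, b3Coeff_one, one_mul, neg_mul, Finset.sum_neg_distrib, sub_eq_add_neg]

theorem exists_b3_eq_of_b3_eq_zero (n : ℕ) (X : Wd K (n + 2)) (hX : b3 K (n + 2) X = 0) :
    ∃ Y : Wd K (n + 1), b3 K (n + 1) Y = X := by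
  refine ⟨fun u => X (Fin.insertNth 1 false u), funext fun w => ?_⟩
  have h := b3_insertNth_one n X w
  rw [hX, Pi.zero_apply] at h
  linear_combination h

/-- For `P = (T(V), b₃)`: `Hⁿ(P) = 0` for `n ≠ 1`, `H¹(P) ≅ K` is spanned by
the class of `a`, and the cocycles `a` and `-b` are cohomologous. -/
theorem P_cohomology (K : Type) [Field K] [CharZero K] :
    -- H⁰ = 0
    (∀ c : K, b3zero K c = 0 → c = 0) ∧
    -- Hⁿ = 0 for n ≥ 2
    (∀ n : ℕ, ∀ X : Wd K (n + 2), b3 K (n + 2) X = 0 →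
      ∃ Y : Wd K (n + 1), b3 K (n + 1) Y = X) ∧
    -- every degree-1 element is a cocycle
    (∀ X : Wd K 1, b3 K 1 X = 0) ∧
    -- H¹ is spanned by the class of a
    (∀ X : Wd K 1, ∃ c d : K, X = c • aElt K + b3zero K d) ∧
    -- the class of a is nonzero, so H¹ ≅ K
    (∀ d : K, aElt K ≠ b3zero K d) ∧
    -- a and -b are cohomologous
    (∃ d : K, aElt K - (-(bElt K)) = b3zero K d) := by
  refine ⟨fun c h => ?_, exists_b3_eq_of_b3_eq_zero, b3_one, fun X => ?_, fun d h => ?_, ?_⟩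
  · simpa [b3zero] using congrFun h (fun _ => false)
  · refine ⟨X (fun _ => false) - X (fun _ => true), 2 * X (fun _ => true), Wd.ext_one ?_ ?_⟩ <;>
      simp [aElt, b3zero]
  · have ha := congrFun h (fun _ => false)
    have hb := congrFun h (fun _ => true)
    simp [aElt, b3zero] at ha hb
    simp [← hb] at ha
  · exact ⟨2, Wd.ext_one (by simp [aElt, bElt, b3zero]) (by simp [aElt, bElt, b3zero])⟩
end
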